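/- Let d ≥ 1, let G ∈ M_d(ℂ) be a Hermitian unitary matrix, let O ∈ M_d(ℂ) be Hermitian with O·G = −G·O, and let ρ ∈ M_d(ℂ) be a density matrix. With W(θ) = exp(−iθG), one has (1/(2π)) ∫₀^{2π} (Tr[O·W(θ)·ρ·W(θ)†])² dθ = (1/2)·(Tr[Oρ])² + (1/2)·(Tr[iOGρ])², and in particular this expectation is at least (1/2)·(Tr[Oρ])². -/

import Mathlib

open Matrix MeasureTheory
open scoped ComplexOrder

noncomputable section

/-- The rotation `W(θ) = exp(−iθG)` generated by a matrix `G`. -/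
def Wrot {d : ℕ} (G : Matrix (Fin d) (Fin d) ℂ) (θ : ℝ) : Matrix (Fin d) (Fin d) ℂ :=
  NormedSpace.exp ((-(Complex.I * (θ : ℂ))) • G)

/-- The commuting part `O₁ = (O + G·O·G)/2` of `O` with respect to `G`. -/
def Opart1 {d : ℕ} (G O : Matrix (Fin d) (Fin d) ℂ) : Matrix (Fin d) (Fin d) ℂ :=
  (2⁻¹ : ℂ) • (O + G * O * G)

/-- The anticommuting part `O₂ = (O − G·O·G)/2` of `O` with respect to `G`. -/
def Opart2 {d : ℕ} (G O : Matrix (Fin d) (Fin d) ℂ) : Matrix (Fin d) (Fin d) ℂ :=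
  (2⁻¹ : ℂ) • (O - G * O * G)

/-! Since `G² = 1`, `W(θ) = cos θ − i sin θ·G`; as `O` anticommutes with `G`, `O·W(θ) = W(−θ)·O`,
and `W(θ)† = W(−θ)`. Hence `W(θ)†·O·W(θ) = O·W(2θ)`, so the real part of `Tr[O W ρ W†]` is
`a cos 2θ − b sin 2θ` with `a = Re Tr[Oρ]`, `b = Re Tr[iOGρ]`. Squaring, the cross term and the
oscillating parts of `cos²`, `sin²` average to zero over a period. -/

open Complex in
theorem exp_smul_of_mul_self_eq_one {𝔸 : Type*} [Ring 𝔸] [Algebra ℂ 𝔸] [TopologicalSpace 𝔸]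
    [IsTopologicalRing 𝔸] [ContinuousSMul ℂ 𝔸] [T2Space 𝔸] {x : 𝔸} (hx : x * x = 1) (z : ℂ) :
    NormedSpace.exp (z • x) = cosh z • (1 : 𝔸) + sinh z • x := by
  have hx_even : ∀ k : ℕ, x ^ (2 * k) = 1 := fun k => by rw [pow_mul, sq, hx, one_pow]
  rw [NormedSpace.exp_eq_tsum ℂ]
  refine HasSum.tsum_eq (HasSum.even_add_odd ?_ ?_)
  · convert (hasSum_cosh z).smul_const (1 : 𝔸) using 2 with k
    rw [smul_pow, hx_even, smul_smul, div_eq_inv_mul]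
  · convert (hasSum_sinh z).smul_const x using 2 with k
    rw [smul_pow, pow_succ x, hx_even, one_mul, smul_smul, div_eq_inv_mul]

section Wrot

variable {d : ℕ} {G O : Matrix (Fin d) (Fin d) ℂ}

theorem Wrot_eq_cos_sub_sin (hG : G * G = 1) (θ : ℝ) :
    Wrot G θ = (Real.cos θ : ℂ) • 1 - (Real.sin θ * Complex.I) • G := by
  rw [Wrot, exp_smul_of_mul_self_eq_one hG, show -(Complex.I * θ) = ((-θ : ℝ) : ℂ) * Complex.I by
    push_cast; ring, Complex.cosh_mul_I, Complex.sinh_mul_I]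
  push_cast
  rw [Complex.cos_neg, Complex.sin_neg, neg_mul, neg_smul, sub_eq_add_neg]

theorem Wrot_conjTranspose (hG : G.IsHermitian) (θ : ℝ) : (Wrot G θ)ᴴ = Wrot G (-θ) := by
  rw [Wrot, Wrot, ← Matrix.exp_conjTranspose, conjTranspose_smul, hG.eq]
  congr 2
  simp

theorem Wrot_mul_Wrot (s t : ℝ) : Wrot G s * Wrot G t = Wrot G (s + t) := by
  rw [Wrot, Wrot, Wrot,
    ← Matrix.exp_add_of_commute _ _ (((Commute.refl G).smul_left _).smul_right _), ← add_smul]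
  congr 2
  push_cast
  ring

theorem mul_Wrot_of_anticommute (hG : G * G = 1) (hanti : O * G = -(G * O)) (θ : ℝ) :
    O * Wrot G θ = Wrot G (-θ) * O := by
  simp only [Wrot_eq_cos_sub_sin hG, Real.cos_neg, Real.sin_neg, Matrix.mul_sub, Matrix.sub_mul,
    Matrix.mul_smul, Matrix.smul_mul, hanti, Matrix.mul_one, Matrix.one_mul]
  push_cast
  module

theorem trace_mul_conj_Wrot (hG : G.IsHermitian) (hGunit : G * G = 1)
    (hanti : O * G = -(G * O)) (ρ : Matrix (Fin d) (Fin d) ℂ) (θ : ℝ) :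
    (O * (Wrot G θ * ρ * (Wrot G θ)ᴴ)).trace = (O * Wrot G (2 * θ) * ρ).trace := by
  rw [Wrot_conjTranspose hG, ← Matrix.mul_assoc, trace_mul_comm, ← Matrix.mul_assoc,
    ← Matrix.mul_assoc, ← mul_Wrot_of_anticommute hGunit hanti, Matrix.mul_assoc O,
    Wrot_mul_Wrot, two_mul]

theorem re_trace_mul_Wrot_mul (hG : G * G = 1) (ρ : Matrix (Fin d) (Fin d) ℂ) (φ : ℝ) :
    (O * Wrot G φ * ρ).trace.re
      = Real.cos φ * (O * ρ).trace.re - Real.sin φ * ((Complex.I • (O * G)) * ρ).trace.re := by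
  have h : (O * Wrot G φ * ρ).trace
      = Real.cos φ * (O * ρ).trace - Real.sin φ * ((Complex.I • (O * G)) * ρ).trace := by
    simp only [Wrot_eq_cos_sub_sin hG, Matrix.mul_sub, Matrix.sub_mul, Matrix.mul_smul,
      Matrix.smul_mul, Matrix.mul_one, trace_sub, trace_smul, smul_eq_mul]
    ring
  rw [h, Complex.sub_re, Complex.re_ofReal_mul, Complex.re_ofReal_mul]

end Wrot

open Real in
theorem integral_cos_nat_mul_eq_zero {n : ℕ} (hn : n ≠ 0) :
    ∫ θ in (0 : ℝ)..2 * π, cos (n * θ) = 0 := by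
  rw [intervalIntegral.integral_comp_mul_left cos (by exact_mod_cast hn), integral_cos,
    show (n : ℝ) * (2 * π) = ((2 * n : ℕ) : ℝ) * π by push_cast; ring, sin_nat_mul_pi]
  simp

open Real in
theorem integral_sin_nat_mul_eq_zero {n : ℕ} (hn : n ≠ 0) :
    ∫ θ in (0 : ℝ)..2 * π, sin (n * θ) = 0 := by
  rw [intervalIntegral.integral_comp_mul_left sin (by exact_mod_cast hn), integral_sin,
    cos_nat_mul_two_pi]
  simp

open Real in
theorem integral_sq_cos_two_mul_sub_sin_two_mul (a b : ℝ) :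
    ∫ θ in (0 : ℝ)..2 * π, (cos (2 * θ) * a - sin (2 * θ) * b) ^ 2 = π * (a ^ 2 + b ^ 2) := by
  have power_reduction : ∀ θ : ℝ, (cos (2 * θ) * a - sin (2 * θ) * b) ^ 2
      = (a ^ 2 + b ^ 2) / 2 + (a ^ 2 - b ^ 2) / 2 * cos ((4 : ℕ) * θ)
        - a * b * sin ((4 : ℕ) * θ) := fun θ => by
    rw [show ((4 : ℕ) : ℝ) * θ = 2 * (2 * θ) by push_cast; ring, cos_two_mul (2 * θ),
      sin_two_mul (2 * θ)]
    linear_combination b ^ 2 * sin_sq_add_cos_sq (2 * θ)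
  have hcos : IntervalIntegrable (fun θ => cos ((4 : ℕ) * θ)) MeasureTheory.volume 0 (2 * π) :=
    (by fun_prop : Continuous _).intervalIntegrable _ _
  have hsin : IntervalIntegrable (fun θ => sin ((4 : ℕ) * θ)) MeasureTheory.volume 0 (2 * π) :=
    (by fun_prop : Continuous _).intervalIntegrable _ _
  simp only [power_reduction]
  rw [intervalIntegral.integral_sub (intervalIntegrable_const.add (hcos.const_mul _))
      (hsin.const_mul _), intervalIntegral.integral_add intervalIntegrable_const (hcos.const_mul _),
    intervalIntegral.integral_const_mul, intervalIntegral.integral_const_mul,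
    integral_cos_nat_mul_eq_zero four_ne_zero, integral_sin_nat_mul_eq_zero four_ne_zero,
    intervalIntegral.integral_const, smul_eq_mul]
  ring

theorem expectation_sq_anticommuting_general
    (d : ℕ)
    (G O : Matrix (Fin d) (Fin d) ℂ)
    (hGherm : G.IsHermitian) (hGunit : G * G = 1)
    (hanti : O * G = -(G * O))
    (ρ : Matrix (Fin d) (Fin d) ℂ) :
    (1 / (2 * Real.pi)) * (∫ θ in (0:ℝ)..(2 * Real.pi),
        ((O * (Wrot G θ * ρ * (Wrot G θ)ᴴ)).trace.re) ^ 2)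
      = (1 / 2) * ((O * ρ).trace.re) ^ 2
        + (1 / 2) * (((Complex.I • (O * G)) * ρ).trace.re) ^ 2
    ∧ (1 / (2 * Real.pi)) * (∫ θ in (0:ℝ)..(2 * Real.pi),
        ((O * (Wrot G θ * ρ * (Wrot G θ)ᴴ)).trace.re) ^ 2)
      ≥ (1 / 2) * ((O * ρ).trace.re) ^ 2 := by
  have hmean : (1 / (2 * Real.pi)) * (∫ θ in (0:ℝ)..(2 * Real.pi),
        ((O * (Wrot G θ * ρ * (Wrot G θ)ᴴ)).trace.re) ^ 2)
      = (1 / 2) * ((O * ρ).trace.re) ^ 2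
        + (1 / 2) * (((Complex.I • (O * G)) * ρ).trace.re) ^ 2 := by
    simp only [trace_mul_conj_Wrot hGherm hGunit hanti, re_trace_mul_Wrot_mul hGunit]
    rw [integral_sq_cos_two_mul_sub_sin_two_mul]
    field_simp [Real.pi_ne_zero]
  exact ⟨hmean, hmean ▸ le_add_of_nonneg_right (by positivity)⟩

/-- For a Hermitian observable `O` anticommuting with the Hermitian unitary `G`,
with `W(θ) = exp(−iθG)`, one has
`E_θ Tr[O W ρ W†]² = ½ Tr[Oρ]² + ½ Tr[iOGρ]² ≥ ½ Tr[Oρ]²`,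
with `θ` uniform on `[0, 2π]`. -/
theorem expectation_sq_anticommuting
    (d : ℕ) (hd : 1 ≤ d)
    (G O : Matrix (Fin d) (Fin d) ℂ)
    (hGherm : G.IsHermitian) (hGunit : G * G = 1) (hO : O.IsHermitian)
    (hanti : O * G = -(G * O))
    (ρ : Matrix (Fin d) (Fin d) ℂ) (hρ : ρ.PosSemidef) (hρtr : ρ.trace = 1) :
    (1 / (2 * Real.pi)) * (∫ θ in (0:ℝ)..(2 * Real.pi),
        ((O * (Wrot G θ * ρ * (Wrot G θ)ᴴ)).trace.re) ^ 2)
      = (1 / 2) * ((O * ρ).trace.re) ^ 2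
        + (1 / 2) * (((Complex.I • (O * G)) * ρ).trace.re) ^ 2
    ∧ (1 / (2 * Real.pi)) * (∫ θ in (0:ℝ)..(2 * Real.pi),
        ((O * (Wrot G θ * ρ * (Wrot G θ)ᴴ)).trace.re) ^ 2)
      ≥ (1 / 2) * ((O * ρ).trace.re) ^ 2 :=
  expectation_sq_anticommuting_general d G O hGherm hGunit hanti ρ
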